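/- Let c, z ∈ ℂ and let λ₇ : FVB₂ → GL₂(ℂ) be the homomorphism defined by λ₇(σ₁) = [[1,0],[c,-1]] and λ₇(ρ₁) = [[-1,0],[z,1]]. Then λ₇ is injective if and only if z ≠ -c. -/

import Mathlib

/-!
`FVB₂` is the infinite dihedral group: every element is `(σ₁ρ₁)ⁿ` or `(σ₁ρ₁)ⁿσ₁`, and `σ₁ρ₁`
has infinite order (it maps to a rotation of `DihedralGroup 0`). A homomorphism out of `FVB₂` is
therefore injective as soon as the image of `σ₁ρ₁` has infinite order and the image of `σ₁` is
not a power of it. For `λ₇` the second condition always holds, since `det λ₇(σ₁) = -1` while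
`det λ₇(σ₁ρ₁) = 1`; and `λ₇(σ₁ρ₁) = -[[1,0],[z+c,1]]`, whose `n`-th power is
`(-1)ⁿ[[1,0],[n(z+c),1]]`, has infinite order exactly when `z + c ≠ 0`.
-/

/-- The relations of the flat virtual braid group on two strands:
`σ₁² = 1` and `ρ₁² = 1`. -/
def FVB2rels : Set (FreeGroup Bool) :=
  {FreeGroup.of true * FreeGroup.of true, FreeGroup.of false * FreeGroup.of false}

/-- The flat virtual braid group `FVB₂ = ⟨σ₁, ρ₁ | σ₁² = ρ₁² = 1⟩`. -/
abbrev FVB2 : Type := PresentedGroup FVB2rels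

/-- The generator `σ₁` of `FVB₂`. -/
def σ1 : FVB2 := PresentedGroup.of true

/-- The generator `ρ₁` of `FVB₂`. -/
def ρ1 : FVB2 := PresentedGroup.of false

theorem Subgroup.exists_zpow_or_zpow_mul_of_mem_closure_pair {G : Type*} [Group G] {a b g : G}
    (ha : a * a = 1) (hb : b * b = 1) (hg : g ∈ Subgroup.closure {a, b}) :
    ∃ n : ℤ, g = (a * b) ^ n ∨ g = (a * b) ^ n * a := by
  set P : G → Prop := fun y ↦ ∃ n : ℤ, y = (a * b) ^ n ∨ y = (a * b) ^ n * a
  have ha' : a⁻¹ = a := inv_eq_of_mul_eq_one_right ha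
  have hb' : b⁻¹ = b := inv_eq_of_mul_eq_one_right hb
  have hconj (n : ℤ) : a * (a * b) ^ n = (a * b) ^ (-n) * a := by
    have : a * (a * b) * a⁻¹ = (a * b)⁻¹ := by
      rw [mul_inv_rev, ha', hb', ← mul_assoc, ha, one_mul]
    rw [zpow_neg, ← inv_zpow, ← this, conj_zpow, ha', mul_assoc _ a, ha, mul_one]
  have hmul_a {y : G} (hy : P y) : P (a * y) := by
    obtain ⟨n, rfl | rfl⟩ := hy
    · exact ⟨-n, .inr (hconj n)⟩
    · exact ⟨-n, .inl (by rw [← mul_assoc, hconj, mul_assoc, ha, mul_one])⟩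
  have hmul_b {y : G} (hy : P y) : P (b * y) := by
    have hby : b * y = (a * b) ^ (-1 : ℤ) * (a * y) := by
      rw [zpow_neg_one, mul_inv_rev, ha', hb', ← mul_assoc, mul_assoc b, ha, mul_one]
    obtain ⟨n, h | h⟩ := hmul_a hy
    · exact ⟨-1 + n, .inl (by rw [hby, h, ← zpow_add])⟩
    · exact ⟨-1 + n, .inr (by rw [hby, h, ← mul_assoc, ← zpow_add])⟩
  induction hg using Subgroup.closure_induction_left with
  | one => exact ⟨0, .inl (zpow_zero _).symm⟩
  | mul_left x hx y _ ih =>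
    rcases hx with rfl | rfl
    exacts [hmul_a ih, hmul_b ih]
  | inv_mul_cancel x hx y _ ih =>
    rcases hx with rfl | rfl
    · rw [ha']; exact hmul_a ih
    · rw [hb']; exact hmul_b ih

namespace FVB2

theorem σ1_mul_self : σ1 * σ1 = 1 :=
  (QuotientGroup.eq_one_iff _).mpr (Subgroup.subset_normalClosure (Or.inl rfl))

theorem ρ1_mul_self : ρ1 * ρ1 = 1 :=
  (QuotientGroup.eq_one_iff _).mpr (Subgroup.subset_normalClosure (Or.inr rfl))

theorem exists_eq_zpow_or_eq_zpow_mul (g : FVB2) :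
    ∃ n : ℤ, g = (σ1 * ρ1) ^ n ∨ g = (σ1 * ρ1) ^ n * σ1 := by
  refine Subgroup.exists_zpow_or_zpow_mul_of_mem_closure_pair σ1_mul_self ρ1_mul_self ?_
  have hgen : Set.range (PresentedGroup.of (rels := FVB2rels)) = {σ1, ρ1} := by
    ext x; simp [σ1, ρ1, or_comm]
  rw [← hgen, PresentedGroup.closure_range_of]
  trivial

def toDihedralGroup : FVB2 →* DihedralGroup 0 :=
  PresentedGroup.toGroup (f := fun b ↦ .sr (if b then 0 else 1)) <| by
    rintro r (rfl | rfl) <;> simp [DihedralGroup.sr_mul_sr]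

theorem not_isOfFinOrder_σ1_mul_ρ1 : ¬IsOfFinOrder (σ1 * ρ1) := by
  intro h
  have hr : toDihedralGroup (σ1 * ρ1) = .r 1 := by
    simp [toDihedralGroup, σ1, ρ1, PresentedGroup.toGroup.of, DihedralGroup.sr_mul_sr]
  have := toDihedralGroup.isOfFinOrder h
  rw [hr, ← orderOf_ne_zero_iff, DihedralGroup.orderOf_r_one] at this
  exact this rfl

theorem injective_iff_not_isOfFinOrder {H : Type*} [Group H] (f : FVB2 →* H)
    (hσ : f σ1 ∉ Subgroup.zpowers (f (σ1 * ρ1))) :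
    Function.Injective f ↔ ¬IsOfFinOrder (f (σ1 * ρ1)) := by
  refine ⟨fun hf ↦ ?_, fun hx ↦ (injective_iff_map_eq_one f).mpr fun g hg ↦ ?_⟩
  · rw [← orderOf_eq_zero_iff, orderOf_injective f hf, orderOf_eq_zero_iff]
    exact not_isOfFinOrder_σ1_mul_ρ1
  · obtain ⟨n, rfl | rfl⟩ := exists_eq_zpow_or_eq_zpow_mul g
    · rw [map_zpow] at hg
      rw [injective_zpow_iff_not_isOfFinOrder.mpr hx (hg.trans (zpow_zero _).symm), zpow_zero]
    · rw [map_mul, map_zpow, mul_eq_one_iff_inv_eq, ← zpow_neg] at hg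
      exact absurd ⟨-n, hg⟩ hσ

end FVB2

theorem Matrix.unitLowerTriangular_fin_two_pow {R : Type*} [CommRing R] (t : R) (n : ℕ) :
    (!![1, 0; t, 1] : Matrix (Fin 2) (Fin 2) R) ^ n = !![1, 0; (n : R) * t, 1] := by
  induction n with
  | zero => simp [Matrix.one_fin_two]
  | succ n ih => rw [pow_succ, ih, Matrix.mul_fin_two]; push_cast; ring_nf

theorem Matrix.GeneralLinearGroup.isOfFinOrder_iff_of_val_eq_neg_unitLowerTriangular
    {R : Type*} [CommRing R] [NoZeroDivisors R] [CharZero R] {A : GL (Fin 2) R} {t : R}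
    (hA : (A : Matrix (Fin 2) (Fin 2) R) = -!![1, 0; t, 1]) :
    IsOfFinOrder A ↔ t = 0 := by
  have hpow (n : ℕ) : ((A ^ n : GL (Fin 2) R) : Matrix (Fin 2) (Fin 2) R)
      = (-1 : R) ^ n • !![1, 0; (n : R) * t, 1] := by
    rw [Units.val_pow_eq_pow_val, hA, ← neg_one_smul R, smul_pow,
      Matrix.unitLowerTriangular_fin_two_pow]
  rw [isOfFinOrder_iff_pow_eq_one]
  constructor
  · rintro ⟨n, hn, hAn⟩
    have h10 : ((A ^ n : GL (Fin 2) R) : Matrix (Fin 2) (Fin 2) R) 1 0 = 0 := by simp [hAn]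
    rw [hpow] at h10
    simpa [hn.ne'] using h10
  · rintro rfl
    refine ⟨2, two_pos, Units.ext ?_⟩
    rw [hpow]; simp [Matrix.one_fin_two]

/-- The representation λ₇ of `FVB₂` with `σ₁ ↦ [[1,0],[c,-1]]`, `ρ₁ ↦ [[-1,0],[z,1]]`
is faithful if and only if `z ≠ -c`. -/
theorem stmt6 (c z : ℂ) (f : FVB2 →* GL (Fin 2) ℂ)
    (hσ : (f σ1 : Matrix (Fin 2) (Fin 2) ℂ) = !![1, 0; c, -1])
    (hρ : (f ρ1 : Matrix (Fin 2) (Fin 2) ℂ) = !![-1, 0; z, 1]) :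
    Function.Injective f ↔ z ≠ -c := by
  have hx : (f (σ1 * ρ1) : Matrix (Fin 2) (Fin 2) ℂ) = -!![1, 0; z + c, 1] := by
    rw [map_mul, Units.val_mul, hσ, hρ, Matrix.mul_fin_two]
    ext i j; fin_cases i <;> fin_cases j <;> simp
  have hdet_σ : (f σ1 : Matrix (Fin 2) (Fin 2) ℂ).det = -1 := by
    rw [hσ, Matrix.det_fin_two_of]; ring
  have hdet_x : f (σ1 * ρ1) ∈ (Matrix.GeneralLinearGroup.det).ker := by
    rw [MonoidHom.mem_ker, Units.ext_iff, Matrix.GeneralLinearGroup.val_det_apply, hx,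
      Matrix.det_neg, Matrix.det_fin_two_of]
    norm_num
  have hσ_notMem : f σ1 ∉ Subgroup.zpowers (f (σ1 * ρ1)) := fun hmem ↦ by
    have := (Subgroup.zpowers_le.mpr hdet_x) hmem
    rw [MonoidHom.mem_ker, Units.ext_iff, Matrix.GeneralLinearGroup.val_det_apply, hdet_σ] at this
    norm_num at this
  rw [FVB2.injective_iff_not_isOfFinOrder f hσ_notMem,
    Matrix.GeneralLinearGroup.isOfFinOrder_iff_of_val_eq_neg_unitLowerTriangular hx,
    ← eq_neg_iff_add_eq_zero]
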